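/- arXiv:2006.08503 — 4 statements merged into one kernel-verified Lean document; each statement's English description precedes it below -/
import Mathlib

section
/- For every odd integer n ≥ 1, g_n(0) = (1/n!) ∫_0^∞ e^{-y} y^n / cosh(y) dy = 2^{-n}(1 − 2^{-n}) ζ(n+1), where ζ is the Riemann zeta function. For every even integer n ≥ 2, g_n(0) = 0. -/
open MeasureTheory Real

/-- g_n(x) = (1/n!) ∫_0^∞ e^{-y} y^n (e^{xy} + (-1)^{n+1} e^{-xy}) / (e^y + (-1)^{n+1} e^{-y}) dy -/
noncomputable def gFun (n : ℕ) (x : ℝ) : ℝ :=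
  (1 / n.factorial) *
    ∫ y in Set.Ioi (0 : ℝ),
      Real.exp (-y) * y ^ n * (Real.exp (x * y) + (-1) ^ (n + 1) * Real.exp (-(x * y))) /
        (Real.exp y + (-1) ^ (n + 1) * Real.exp (-y))

/-!
For `t > 0`, expanding `e^{-t} / cosh t = 2 e^{-2t} / (1 + e^{-2t})` as a geometric series gives
`2 ∑_{k ≥ 0} (-1)^k e^{-2(k+1)t}`. Integrating termwise against `t^{s-1}` turns the Mellin transform
into `Γ(s) 2^{1-s} η(s)`, and the alternating zeta function is `η(s) = (1 - 2^{1-s}) ζ(s)`, since its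
even terms contribute `2^{-s} ζ(s)` with the sign flipped. At `s = n + 1` this is the odd case; in the
even case the numerator `e^{0} - e^{0}` of the integrand of `g_n(0)` vanishes.
-/

lemma hasSum_one_div_nat_cpow_riemannZeta {s : ℂ} (hs : 1 < s.re) :
    HasSum (fun n : ℕ ↦ 1 / (n : ℂ) ^ s) (riemannZeta s) :=
  zeta_eq_tsum_one_div_nat_cpow hs ▸ (Complex.summable_one_div_nat_cpow.mpr hs).hasSum

lemma hasSum_neg_one_pow_div_nat_add_one_cpow {s : ℂ} (hs : 1 < s.re) :
    HasSum (fun n : ℕ ↦ (-1) ^ n / ((n : ℂ) + 1) ^ s) ((1 - 2 ^ (1 - s)) * riemannZeta s) := by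
  have hζ := hasSum_one_div_nat_cpow_riemannZeta hs
  have hinj : Function.Injective (2 * · : ℕ → ℕ) := mul_right_injective₀ two_ne_zero
  have heven : HasSum (fun k : ℕ ↦ if Even k then 1 / (k : ℂ) ^ s else 0)
      (2 ^ (-s) * riemannZeta s) := by
    rw [← hinj.hasSum_iff fun k hk ↦ if_neg fun ⟨j, hj⟩ ↦ hk ⟨j, by simp only; omega⟩]
    refine (hζ.mul_left (2 ^ (-s))).congr_fun fun j ↦ ?_
    simp only [Function.comp_apply, if_pos (even_two_mul j)]
    rw [Nat.cast_mul, Nat.cast_ofNat, ← Nat.cast_ofNat (R := ℂ) (n := 2),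
      Complex.natCast_mul_natCast_cpow, Complex.cpow_neg]
    ring
  have halt : HasSum (fun k : ℕ ↦ (-1) ^ (k + 1) / (k : ℂ) ^ s)
      ((1 - 2 ^ (1 - s)) * riemannZeta s) := by
    have hval : (1 - 2 ^ (1 - s)) * riemannZeta s
        = riemannZeta s - 2 * (2 ^ (-s) * riemannZeta s) := by
      rw [sub_eq_add_neg 1 s, Complex.cpow_add _ _ two_ne_zero, Complex.cpow_one]
      ring
    rw [hval]
    refine (hζ.sub (heven.mul_left 2)).congr_fun fun k ↦ ?_
    rcases Nat.even_or_odd k with hk | hk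
    · rw [if_pos hk, hk.add_one.neg_one_pow]; ring
    · rw [if_neg (Nat.not_even_iff_odd.mpr hk), hk.add_one.neg_one_pow]; ring
  rw [← hasSum_nat_add_iff' 1] at halt
  simpa [Complex.zero_cpow (Complex.ne_zero_of_one_lt_re hs), pow_succ] using halt

lemma hasSum_exp_neg_div_cosh {t : ℝ} (ht : 0 < t) :
    HasSum (fun k : ℕ ↦ 2 * (-1) ^ k * rexp (-(2 * (k + 1)) * t)) (rexp (-t) / cosh t) := by
  set q := rexp (-(2 * t))
  have hq : |-q| < 1 := by
    rw [abs_neg, abs_of_pos (exp_pos _)]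
    exact exp_lt_one_iff.mpr (by linarith)
  have hsum : rexp (-t) / cosh t = 2 * q * (1 - -q)⁻¹ := by
    have h1 : rexp (-t) = q * rexp t := by rw [← exp_add]; ring_nf
    have h2 : cosh t = rexp t * (1 + q) / 2 := by rw [cosh_eq, h1]; ring
    rw [h2, h1]
    field_simp
    ring
  rw [hsum]
  refine ((hasSum_geometric_of_abs_lt_one hq).mul_left (2 * q)).congr_fun fun k ↦ ?_
  have hpow : rexp (-(2 * (k + 1)) * t) = q * q ^ k := by
    rw [← exp_nat_mul, ← exp_add]; ring_nf
  rw [hpow, neg_pow]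
  ring

lemma mellin_exp_neg_div_cosh {s : ℂ} (hs : 1 < s.re) :
    mellin (fun t : ℝ ↦ ((rexp (-t) / cosh t : ℝ) : ℂ)) s
      = Complex.Gamma s * 2 ^ (1 - s) * ((1 - 2 ^ (1 - s)) * riemannZeta s) := by
  have hF (t : ℝ) (ht : t ∈ Set.Ioi 0) : HasSum
      (fun k : ℕ ↦ (2 * (-1) ^ k : ℂ) * rexp (-(2 * (k + 1)) * t))
      ((rexp (-t) / cosh t : ℝ) : ℂ) :=
    (Complex.hasSum_ofReal.mpr (hasSum_exp_neg_div_cosh ht)).congr_fun fun k ↦ by push_cast; ring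
  have hsummable : Summable fun k : ℕ ↦ ‖(2 * (-1) ^ k : ℂ)‖ / (2 * ((k : ℝ) + 1)) ^ s.re := by
    have hp : Summable fun k : ℕ ↦ (((k : ℝ) + 1) ^ s.re)⁻¹ := by
      simpa using (summable_nat_add_iff 1).mpr (Real.summable_nat_rpow_inv.mpr hs)
    refine (hp.mul_left (2 / 2 ^ s.re)).congr fun k ↦ ?_
    rw [norm_mul, norm_pow, norm_neg, norm_one, one_pow, mul_one, Complex.norm_ofNat,
      mul_rpow zero_le_two (by positivity)]
    field_simp
  have H := hasSum_mellin (fun k ↦ Or.inr (by positivity)) (by linarith) hF hsummable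
  refine H.unique (((hasSum_neg_one_pow_div_nat_add_one_cpow hs).mul_left
    (Complex.Gamma s * 2 ^ (1 - s))).congr_fun fun k ↦ ?_)
  have h2 : (2 : ℂ) ^ (1 - s) = 2 / 2 ^ s := by
    rw [Complex.cpow_sub _ _ two_ne_zero, Complex.cpow_one]
  have hk : ((2 * ((k : ℝ) + 1) : ℝ) : ℂ) ^ s = 2 ^ s * ((k : ℂ) + 1) ^ s := by
    rw [Complex.ofReal_mul, Complex.mul_cpow_ofReal_nonneg zero_le_two (by positivity)]
    push_cast
    rfl
  have hks : ((k : ℂ) + 1) ^ s ≠ 0 := by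
    rw [Ne, Complex.cpow_eq_zero_iff]
    exact fun h ↦ k.cast_add_one_ne_zero h.1
  rw [hk, h2]
  field_simp

lemma integral_exp_neg_mul_pow_div_cosh {n : ℕ} (hn : 1 ≤ n) :
    ((∫ y in Set.Ioi (0 : ℝ), rexp (-y) * y ^ n / cosh y : ℝ) : ℂ)
      = n.factorial * (2 ^ (-(n : ℤ)) * (1 - 2 ^ (-(n : ℤ))) * riemannZeta (n + 1)) := by
  have hmellin : ((∫ y in Set.Ioi (0 : ℝ), rexp (-y) * y ^ n / cosh y : ℝ) : ℂ)
      = mellin (fun t : ℝ ↦ ((rexp (-t) / cosh t : ℝ) : ℂ)) (n + 1) := by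
    rw [mellin, ← integral_complex_ofReal]
    refine setIntegral_congr_fun measurableSet_Ioi fun t _ ↦ ?_
    rw [add_sub_cancel_right, Complex.cpow_natCast, smul_eq_mul]
    push_cast
    ring
  have hexp : (1 : ℂ) - (n + 1) = ((-(n : ℤ) : ℤ) : ℂ) := by push_cast; ring
  rw [hmellin, mellin_exp_neg_div_cosh (by simp; omega), hexp, Complex.cpow_intCast,
    Complex.Gamma_nat_eq_factorial]
  ring

lemma gFun_zero_of_odd {n : ℕ} (hn : Odd n) :
    gFun n 0 = 1 / n.factorial * ∫ y in Set.Ioi (0 : ℝ), rexp (-y) * y ^ n / cosh y := by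
  rw [gFun]
  congr 1
  refine setIntegral_congr_fun measurableSet_Ioi fun y _ ↦ ?_
  rw [hn.add_one.neg_one_pow, cosh_eq]
  simp only [zero_mul, neg_zero, exp_zero, one_mul]
  field_simp
  ring

lemma gFun_zero_of_even {n : ℕ} (hn : Even n) : gFun n 0 = 0 := by
  simp [gFun, hn.add_one.neg_one_pow]

theorem gFun_at_zero_general (n : ℕ) :
    (Odd n →
      gFun n 0 = (1 / n.factorial) * ∫ y in Set.Ioi (0 : ℝ), Real.exp (-y) * y ^ n / Real.cosh y ∧
      (gFun n 0 : ℂ) = 2 ^ (-(n : ℤ)) * (1 - 2 ^ (-(n : ℤ))) * riemannZeta (n + 1)) ∧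
    (Even n → gFun n 0 = 0) := by
  refine ⟨fun hn ↦ ⟨gFun_zero_of_odd hn, ?_⟩, gFun_zero_of_even⟩
  rw [gFun_zero_of_odd hn]
  push_cast
  rw [integral_exp_neg_mul_pow_div_cosh hn.pos, one_div, inv_mul_cancel_left₀]
  exact_mod_cast n.factorial_ne_zero

/-- for n ≥ 1 odd, g_n(0) = (1/n!)∫_0^∞ e^{-y} y^n / cosh y dy
    = 2^{-n}(1 − 2^{-n}) ζ(n+1); for n even, g_n(0) = 0. -/
theorem gFun_at_zero (n : ℕ) (hn : 1 ≤ n) :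
    (Odd n →
      gFun n 0 = (1 / n.factorial) * ∫ y in Set.Ioi (0 : ℝ), Real.exp (-y) * y ^ n / Real.cosh y ∧
      (gFun n 0 : ℂ) = 2 ^ (-(n : ℤ)) * (1 - 2 ^ (-(n : ℤ))) * riemannZeta (n + 1)) ∧
    (Even n → gFun n 0 = 0) :=
  gFun_at_zero_general n
end

section
/- For each integer n ≥ 1, the series C_n = Σ_{m=2}^∞ Λ(m)² / (m (log m)^{2n+2}) converges, and satisfies 1/(2(log 2)^{2n}) ≤ C_n ≤ 1/(2(log 2)^{2n}) + A/(log 3)^{2n} for some universal constant A > 0 independent of n. Consequently C_n → ∞ as n → ∞ and C_n ∼ 1/(2(log 2)^{2n}). -/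
open Filter

/-- The m-th term of C_n (vanishes for m = 0, 1 since Λ(m) = 0 there). -/
noncomputable def Cterm (n m : ℕ) : ℝ :=
  (ArithmeticFunction.vonMangoldt m) ^ 2 / (m * Real.log m ^ (2 * n + 2))

/-- C_n = Σ_{m=2}^∞ Λ(m)²/(m (log m)^{2n+2}). -/
noncomputable def Cseries (n : ℕ) : ℝ := ∑' m : ℕ, Cterm n m

/-!
Only the term m = 2 matters at the scale (log 2)^{-2n}. For m ≥ 3, Λ(m) ≤ log m gives
Λ(m)² / (m (log m)^{2n+2}) ≤ (log 3)^{-(2n-2)} / (m (log m)²), and Σ 1 / (m (log m)²) converges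
by Cauchy condensation. So 0 ≤ C_n - 1 / (2 (log 2)^{2n}) = O((log 3)^{-2n}), which is negligible
against (log 2)^{-2n}.
-/

open ArithmeticFunction Topology

theorem summable_one_div_nat_mul_log_pow {p : ℕ} (hp : 1 < p) :
    Summable fun m : ℕ => 1 / (m * Real.log m ^ p) := by
  have hnonneg : ∀ m : ℕ, 0 ≤ 1 / ((m : ℝ) * Real.log m ^ p) := fun m => by
    have : 0 ≤ Real.log m := Real.log_natCast_nonneg m
    positivity
  have hanti : ∀ᶠ m : ℕ in atTop,
      1 / (((m + 1 : ℕ) : ℝ) * Real.log (m + 1 : ℕ) ^ p) ≤ 1 / ((m : ℝ) * Real.log m ^ p) := by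
    filter_upwards [eventually_ge_atTop 2] with m hm
    have hm' : (2 : ℝ) ≤ m := by exact_mod_cast hm
    have hlog : 0 < Real.log m := Real.log_pos (by linarith)
    gcongr <;> omega
  rw [← summable_condensed_iff_of_eventually_nonneg (Eventually.of_forall hnonneg) hanti]
  have hlog2 : 0 < Real.log 2 := Real.log_pos one_lt_two
  have hcond : (fun k : ℕ => (2 : ℝ) ^ k * (1 / (((2 ^ k : ℕ) : ℝ) * Real.log (2 ^ k : ℕ) ^ p)))
      = fun k : ℕ => (Real.log 2 ^ p)⁻¹ * (1 / (k : ℝ) ^ p) := by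
    ext k
    push_cast
    rw [Real.log_pow, mul_pow]
    field_simp
  rw [hcond]
  exact (Real.summable_one_div_nat_pow.mpr hp).mul_left _

theorem Cterm_nonneg (n m : ℕ) : 0 ≤ Cterm n m := by
  have : 0 ≤ Real.log m := Real.log_natCast_nonneg m
  unfold Cterm
  positivity

theorem Cterm_zero (n : ℕ) : Cterm n 0 = 0 := by
  simp [Cterm]

theorem Cterm_one (n : ℕ) : Cterm n 1 = 0 := by
  simp [Cterm]

theorem Cterm_two (n : ℕ) : Cterm n 2 = 1 / (2 * Real.log 2 ^ (2 * n)) := by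
  have : Real.log 2 ≠ 0 := (Real.log_pos one_lt_two).ne'
  simp only [Cterm, Nat.cast_ofNat, vonMangoldt_apply_prime Nat.prime_two, pow_add]
  field_simp

theorem Cterm_succ_le {m : ℕ} (k : ℕ) (hm : 3 ≤ m) :
    Cterm (k + 1) m ≤ (Real.log 3 ^ (2 * k))⁻¹ * (1 / (m * Real.log m ^ 2)) := by
  have hm' : (3 : ℝ) ≤ m := by exact_mod_cast hm
  have hlog3 : 0 < Real.log 3 := Real.log_pos (by norm_num)
  have hlog : Real.log 3 ≤ Real.log m := Real.log_le_log (by norm_num) hm'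
  have hlogm : 0 < Real.log m := hlog3.trans_le hlog
  calc Cterm (k + 1) m ≤ Real.log m ^ 2 / (m * Real.log m ^ (2 * (k + 1) + 2)) := by
        unfold Cterm
        gcongr
        exact vonMangoldt_le_log
    _ = (Real.log m ^ (2 * k))⁻¹ * (1 / (m * Real.log m ^ 2)) := by
        field_simp
        ring
    _ ≤ (Real.log 3 ^ (2 * k))⁻¹ * (1 / (m * Real.log m ^ 2)) := by
        gcongr

theorem summable_Cterm_succ (k : ℕ) : Summable (Cterm (k + 1)) := by
  rw [← summable_nat_add_iff 3]
  refine .of_nonneg_of_le (fun m => Cterm_nonneg _ _) (fun m => Cterm_succ_le k (by omega)) ?_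
  exact ((summable_nat_add_iff 3).mpr (summable_one_div_nat_mul_log_pow one_lt_two)).mul_left _

theorem Cseries_succ_eq (k : ℕ) :
    Cseries (k + 1) = 1 / (2 * Real.log 2 ^ (2 * (k + 1))) + ∑' m, Cterm (k + 1) (m + 3) := by
  rw [Cseries, ← (summable_Cterm_succ k).sum_add_tsum_nat_add 3]
  simp [Finset.sum_range_succ, Cterm_zero, Cterm_one, Cterm_two]

theorem tendsto_div_nhds_one_of_le_of_le_add {α : Type*} {l : Filter α} {a c e : α → ℝ}
    (ha : ∀ᶠ x in l, 0 < a x) (hlow : ∀ᶠ x in l, a x ≤ c x) (hup : ∀ᶠ x in l, c x ≤ a x + e x)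
    (he : Tendsto (fun x => e x / a x) l (𝓝 0)) :
    Tendsto (fun x => c x / a x) l (𝓝 1) := by
  have hupper : Tendsto (fun x => 1 + e x / a x) l (𝓝 1) := by
    simpa using he.const_add 1
  refine tendsto_of_tendsto_of_tendsto_of_le_of_le' tendsto_const_nhds hupper ?_ ?_
  · filter_upwards [ha, hlow] with x hax hlowx
    rwa [le_div_iff₀ hax, one_mul]
  · filter_upwards [ha, hup] with x hax hupx
    rwa [div_le_iff₀ hax, add_mul, one_mul, div_mul_cancel₀ _ hax.ne']

theorem tendsto_one_div_two_mul_log_two_pow :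
    Tendsto (fun n : ℕ => 1 / (2 * Real.log 2 ^ (2 * n))) atTop atTop := by
  have hlog2 : 0 < Real.log 2 := Real.log_pos one_lt_two
  have hlog2' : Real.log 2 < 1 := by
    rw [Real.log_lt_iff_lt_exp two_pos]
    exact lt_trans (by norm_num) Real.exp_one_gt_d9
  have hbase : 1 < (Real.log 2 ^ 2)⁻¹ := one_lt_inv₀ (by positivity) |>.mpr (by nlinarith)
  convert (tendsto_pow_atTop_atTop_of_one_lt hbase).const_mul_atTop (one_half_pos (α := ℝ))
    using 2 with n
  rw [pow_mul, inv_pow]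
  ring

theorem one_div_two_mul_log_two_pow_le_Cseries (k : ℕ) :
    1 / (2 * Real.log 2 ^ (2 * (k + 1))) ≤ Cseries (k + 1) := by
  rw [Cseries_succ_eq]
  exact le_add_of_nonneg_right (tsum_nonneg fun m => Cterm_nonneg _ _)

theorem exists_Cseries_le : ∃ A > 0, ∀ k : ℕ,
    Cseries (k + 1) ≤ 1 / (2 * Real.log 2 ^ (2 * (k + 1))) + A / Real.log 3 ^ (2 * (k + 1)) := by
  have hlog3 : 0 < Real.log 3 := Real.log_pos (by norm_num)
  set g : ℕ → ℝ := fun m => 1 / (((m + 3 : ℕ) : ℝ) * Real.log (m + 3 : ℕ) ^ 2)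
  have hg : Summable g :=
    (summable_nat_add_iff 3).mpr (summable_one_div_nat_mul_log_pow one_lt_two)
  have hg_nonneg : ∀ m, 0 ≤ g m := fun m => by
    have : 0 ≤ Real.log (m + 3 : ℕ) := Real.log_natCast_nonneg _
    positivity
  have hg_pos : 0 < ∑' m, g m := hg.tsum_pos hg_nonneg 0 (by simp [g]; positivity)
  refine ⟨Real.log 3 ^ 2 * ∑' m, g m, by positivity, fun k => ?_⟩
  have htail : ∑' m, Cterm (k + 1) (m + 3) ≤ (Real.log 3 ^ (2 * k))⁻¹ * ∑' m, g m := by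
    rw [← tsum_mul_left]
    exact ((summable_nat_add_iff 3).mpr (summable_Cterm_succ k)).tsum_le_tsum
      (fun m => Cterm_succ_le k (by omega)) (hg.mul_left _)
  have hA : (Real.log 3 ^ 2 * ∑' m, g m) / Real.log 3 ^ (2 * (k + 1))
      = (Real.log 3 ^ (2 * k))⁻¹ * ∑' m, g m := by
    rw [mul_add, mul_one, pow_add]
    field_simp
  rw [Cseries_succ_eq, hA]
  exact add_le_add_right htail _

theorem tendsto_div_log_three_pow_div (A : ℝ) :
    Tendsto (fun n : ℕ => A / Real.log 3 ^ (2 * n) / (1 / (2 * Real.log 2 ^ (2 * n))))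
      atTop (𝓝 0) := by
  have hlog2 : 0 < Real.log 2 := Real.log_pos one_lt_two
  have hlt : Real.log 2 < Real.log 3 := Real.log_lt_log two_pos (by norm_num)
  have hr : (Real.log 2 / Real.log 3) ^ 2 < 1 :=
    pow_lt_one₀ (by positivity) ((div_lt_one (hlog2.trans hlt)).mpr hlt) two_ne_zero
  convert (tendsto_pow_atTop_nhds_zero_of_lt_one (by positivity) hr).const_mul (2 * A)
    using 2 with n
  · rw [← pow_mul, div_pow, pow_mul, pow_mul]
    field_simp
  · rw [mul_zero]

/-- for each n ≥ 1 the series C_n converges, satisfies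
    1/(2(log 2)^{2n}) ≤ C_n ≤ 1/(2(log 2)^{2n}) + A/(log 3)^{2n} for a universal A > 0,
    and consequently C_n → ∞ and C_n ∼ 1/(2(log 2)^{2n}). -/
theorem Cseries_properties :
    (∀ n : ℕ, 1 ≤ n → Summable (Cterm n)) ∧
    (∃ A > 0, ∀ n : ℕ, 1 ≤ n →
      1 / (2 * Real.log 2 ^ (2 * n)) ≤ Cseries n ∧
      Cseries n ≤ 1 / (2 * Real.log 2 ^ (2 * n)) + A / Real.log 3 ^ (2 * n)) ∧
    Tendsto Cseries atTop atTop ∧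
    Tendsto (fun n => Cseries n * (2 * Real.log 2 ^ (2 * n))) atTop (nhds 1) := by
  obtain ⟨A, hA, hupper⟩ := exists_Cseries_le
  have hbounds : ∀ n : ℕ, 1 ≤ n →
      1 / (2 * Real.log 2 ^ (2 * n)) ≤ Cseries n ∧
      Cseries n ≤ 1 / (2 * Real.log 2 ^ (2 * n)) + A / Real.log 3 ^ (2 * n) := by
    intro n hn
    obtain ⟨k, rfl⟩ := Nat.exists_eq_add_of_le' hn
    exact ⟨one_div_two_mul_log_two_pow_le_Cseries k, hupper k⟩
  refine ⟨fun n hn => ?_, ⟨A, hA, hbounds⟩, ?_, ?_⟩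
  · obtain ⟨k, rfl⟩ := Nat.exists_eq_add_of_le' hn
    exact summable_Cterm_succ k
  · exact tendsto_atTop_mono' atTop (eventually_atTop.mpr ⟨1, fun n hn => (hbounds n hn).1⟩)
      tendsto_one_div_two_mul_log_two_pow
  · convert tendsto_div_nhds_one_of_le_of_le_add (.of_forall fun n => by positivity)
      (eventually_atTop.mpr ⟨1, fun n hn => (hbounds n hn).1⟩)
      (eventually_atTop.mpr ⟨1, fun n hn => (hbounds n hn).2⟩)
      (tendsto_div_log_three_pow_div A) using 2 with n
    rw [div_div_eq_mul_div, div_one]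
end

section
/- For every integer m ≥ 2, the sum Σ_{k ≥ 2, k ≠ m} 1/(k² |log(m/k)|) is bounded by a constant independent of m. -/
/-!
From `log t ≥ 1 - 1/t` one gets `|log (m/k)| ≥ |m - k| / max m k`, so the `k`-th term is at most
`1/(k |m - k|)`, plus `1/k²` when `k < m`. By AM-GM, `2/(k |m - k|) ≤ 1/k² + 1/(m - k)²`, and the
sum is bounded by `2 ζ(2) + ∑_{n ∈ ℤ} 1/n²`, since the terms `1/(m - k)²` form a subseries of
the latter.
-/

open Real

lemma sub_div_le_log_div {x y : ℝ} (hy : 0 < y) (hyx : y ≤ x) : (x - y) / x ≤ log (x / y) := by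
  have hx : 0 < x := hy.trans_le hyx
  calc (x - y) / x = 1 - (x / y)⁻¹ := by field_simp
    _ ≤ log (x / y) := one_sub_inv_le_log_of_pos (by positivity)

lemma two_div_mul_le_one_div_sq_add_one_div_sq (a b : ℝ) : 2 / (a * b) ≤ 1 / a ^ 2 + 1 / b ^ 2 := by
  simpa only [div_eq_mul_inv, one_mul, mul_inv, inv_pow, mul_assoc] using two_mul_le_add_sq a⁻¹ b⁻¹

lemma one_div_sq_mul_abs_log_div_le {x y : ℝ} (hx : 0 < x) (hy : 0 < y) :
    1 / (y ^ 2 * |log (x / y)|) ≤ 2 / y ^ 2 + 1 / (y - x) ^ 2 := by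
  have h₂ : 2 / y ^ 2 = 2 * (1 / y ^ 2) := by ring
  have h₀ : 0 ≤ 1 / y ^ 2 := by positivity
  rcases lt_trichotomy y x with hyx | rfl | hxy
  · have hlog : (x - y) / x ≤ |log (x / y)| :=
      (sub_div_le_log_div hy hyx.le).trans (le_abs_self _)
    have hxy : 0 < x - y := sub_pos.2 hyx
    calc 1 / (y ^ 2 * |log (x / y)|) ≤ 1 / (y ^ 2 * ((x - y) / x)) := by gcongr
      _ = 1 / y ^ 2 + 2 / (y * (x - y)) / 2 := by field_simp; ring
      _ ≤ 1 / y ^ 2 + (1 / y ^ 2 + 1 / (x - y) ^ 2) / 2 := by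
        gcongr; exact two_div_mul_le_one_div_sq_add_one_div_sq _ _
      _ ≤ 2 / y ^ 2 + 1 / (y - x) ^ 2 := by
        rw [← neg_sub x y, neg_sq, h₂]
        have : 0 ≤ 1 / (x - y) ^ 2 := by positivity
        linarith
  · simp only [div_self hy.ne', log_one, abs_zero, mul_zero, div_zero, sub_self]
    positivity
  · have hlog : (y - x) / y ≤ |log (x / y)| := by
      rw [show x / y = (y / x)⁻¹ from (inv_div y x).symm, log_inv, abs_neg]
      exact (sub_div_le_log_div hx hxy.le).trans (le_abs_self _)
    have hyx : 0 < y - x := sub_pos.2 hxy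
    calc 1 / (y ^ 2 * |log (x / y)|) ≤ 1 / (y ^ 2 * ((y - x) / y)) := by gcongr
      _ = 2 / (y * (y - x)) / 2 := by field_simp
      _ ≤ (1 / y ^ 2 + 1 / (y - x) ^ 2) / 2 := by
        gcongr; exact two_div_mul_le_one_div_sq_add_one_div_sq _ _
      _ ≤ 2 / y ^ 2 + 1 / (y - x) ^ 2 := by
        rw [h₂]
        have : 0 ≤ 1 / (y - x) ^ 2 := by positivity
        linarith

lemma natCast_sub_intCast_injective (m : ℤ) : Function.Injective fun k : ℕ => (k : ℤ) - m :=
  fun a b h => by simpa using h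

lemma summable_one_div_natCast_sub_sq (m : ℤ) : Summable fun k : ℕ => 1 / ((k : ℝ) - m) ^ 2 := by
  have := (Real.summable_one_div_int_pow.2 one_lt_two).comp_injective
    (natCast_sub_intCast_injective m)
  simpa [Function.comp_def] using this

lemma tsum_one_div_natCast_sub_sq_le (m : ℤ) :
    ∑' k : ℕ, 1 / ((k : ℝ) - m) ^ 2 ≤ ∑' n : ℤ, 1 / (n : ℝ) ^ 2 := by
  have := tsum_comp_le_tsum_of_inj (Real.summable_one_div_int_pow.2 one_lt_two)
    (fun n : ℤ => by positivity) (natCast_sub_intCast_injective m)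
  simpa [Function.comp_def] using this

/-- Σ_{k ≥ 2, k ≠ m} 1/(k² |log(m/k)|) is bounded uniformly in m ≥ 2. -/
theorem sum_inv_sq_log_bounded :
    ∃ C : ℝ, ∀ m : ℕ, 2 ≤ m →
      (∑' k : ℕ, if 2 ≤ k ∧ k ≠ m then
          1 / (k ^ 2 * |Real.log ((m : ℝ) / k)|) else 0) ≤ C := by
  refine ⟨2 * ∑' k : ℕ, 1 / (k : ℝ) ^ 2 + ∑' n : ℤ, 1 / (n : ℝ) ^ 2, fun m hm => ?_⟩
  have hsq : Summable fun k : ℕ => 2 / (k : ℝ) ^ 2 := by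
    simpa only [mul_one_div] using (Real.summable_one_div_nat_pow.2 one_lt_two).mul_left 2
  have hshift : Summable fun k : ℕ => 1 / ((k : ℝ) - m) ^ 2 := by
    exact_mod_cast summable_one_div_natCast_sub_sq m
  have hle : ∀ k : ℕ, (if 2 ≤ k ∧ k ≠ m then 1 / (k ^ 2 * |log ((m : ℝ) / k)|) else 0) ≤
      2 / (k : ℝ) ^ 2 + 1 / ((k : ℝ) - m) ^ 2 := fun k => by
    split_ifs with hk
    · exact one_div_sq_mul_abs_log_div_le (Nat.cast_pos.2 (by omega)) (Nat.cast_pos.2 (by omega))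
    · positivity
  calc (∑' k : ℕ, if 2 ≤ k ∧ k ≠ m then 1 / (k ^ 2 * |log ((m : ℝ) / k)|) else 0)
      ≤ ∑' k : ℕ, (2 / (k : ℝ) ^ 2 + 1 / ((k : ℝ) - m) ^ 2) :=
        ((hsq.add hshift).of_nonneg_of_le (fun k => by positivity) hle).tsum_mono
          (hsq.add hshift) hle
    _ = 2 * ∑' k : ℕ, 1 / (k : ℝ) ^ 2 + ∑' k : ℕ, 1 / ((k : ℝ) - m) ^ 2 := by
        simp only [hsq.tsum_add hshift, ← tsum_mul_left, mul_one_div]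
    _ ≤ 2 * ∑' k : ℕ, 1 / (k : ℝ) ^ 2 + ∑' n : ℤ, 1 / (n : ℝ) ^ 2 := by
        simpa using tsum_one_div_natCast_sub_sq_le m
end

section
/- For each integer n ≥ 1, define h_n : ℝ → ℝ by h_n(u) = Im{i^{n+2} e^{iu}} · ∫_0^∞ y^{n+1}/(y² + u²) · 2/(e^y + (−1)^{n+1} e^{−y}) dy. Then |h_n(u)| ≪ min{1, 1/u²} for all u ≠ 0, and h_n is even when n is odd and odd when n is even. -/
/-!
With `c = I ^ (n + 2)`, the trigonometric factor is `c.re * sin u + c.im * cos u`, where `c` is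
real for even `n` and purely imaginary for odd `n`; this gives the parity, and the factor is
bounded by `1`. The weight `2 / (e^y ± e^{-y})` is at most `2 e^{-y}` for odd `n` and at most
`(1 / y + 2) e^{-y}` always (because `1 + 2y ≤ e^{2y}`), so for `n ≥ 1` both `y^{n-1}` and
`y^{n+1}` times the weight are integrable on `(0, ∞)`. Bounding `y^{n+1} / (y^2 + u^2)` by
`y^{n-1}` and by `y^{n+1} / u^2` then gives the bounds `≪ 1` and `≪ 1 / u^2`.
-/
open MeasureTheory Real

noncomputable def hFun (n : ℕ) (u : ℝ) : ℝ :=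
  (Complex.I ^ (n + 2) * Complex.exp (Complex.I * u)).im *
    ∫ y in Set.Ioi (0 : ℝ),
      y ^ (n + 1) / (y ^ 2 + u ^ 2) * (2 / (Real.exp y + (-1) ^ (n + 1) * Real.exp (-y)))

open Set

/-- `1 / cosh y` for odd `n`, `1 / sinh y` for even `n`. -/
noncomputable def hWeight (n : ℕ) (y : ℝ) : ℝ := 2 / (exp y + (-1) ^ (n + 1) * exp (-y))

lemma hWeight_denom_pos (n : ℕ) {y : ℝ} (hy : 0 < y) :
    0 < exp y + (-1) ^ (n + 1) * exp (-y) := by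
  have : exp (-y) < exp y := exp_lt_exp.mpr (by linarith)
  rcases neg_one_pow_eq_or ℝ (n + 1) with h | h <;> rw [h] <;> linarith [exp_pos (-y)]

lemma hWeight_pos (n : ℕ) {y : ℝ} (hy : 0 < y) : 0 < hWeight n y :=
  div_pos two_pos (hWeight_denom_pos n hy)

lemma continuousOn_hWeight (n : ℕ) : ContinuousOn (hWeight n) (Ioi 0) :=
  continuousOn_const.div (by fun_prop) fun _ hy => (hWeight_denom_pos n hy).ne'

lemma hWeight_le_of_odd {n : ℕ} (hn : Odd n) (y : ℝ) : hWeight n y ≤ 2 * exp (-y) := by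
  rw [hWeight, hn.add_one.neg_one_pow, one_mul, div_le_iff₀ (by positivity), mul_assoc,
    mul_add, ← exp_add, neg_add_cancel, exp_zero]
  nlinarith [exp_pos (-y), exp_pos y]

lemma mul_hWeight_le (n : ℕ) {y : ℝ} (hy : 0 < y) :
    y * hWeight n y ≤ (1 + 2 * y) * exp (-y) := by
  have hsinh : 0 < exp y - exp (-y) := sub_pos.mpr (exp_lt_exp.mpr (by linarith))
  have hle : hWeight n y ≤ 2 / (exp y - exp (-y)) := by
    refine div_le_div_of_nonneg_left zero_le_two hsinh ?_
    rcases neg_one_pow_eq_or ℝ (n + 1) with h | h <;> rw [h] <;> linarith [exp_pos (-y)]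
  have hexp : 1 + 2 * y ≤ exp y * exp y := by rw [← exp_add]; linarith [add_one_le_exp (y + y)]
  have hinv : exp y * exp (-y) = 1 := by rw [← exp_add, add_neg_cancel, exp_zero]
  have hdecay : (1 + 2 * y) * (exp (-y) * exp (-y)) ≤ 1 :=
    calc (1 + 2 * y) * (exp (-y) * exp (-y))
        ≤ exp y * exp y * (exp (-y) * exp (-y)) := by gcongr
      _ = 1 := by linear_combination (exp y * exp (-y) + 1) * hinv
  calc y * hWeight n y ≤ y * (2 / (exp y - exp (-y))) := mul_le_mul_of_nonneg_left hle hy.le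
    _ ≤ (1 + 2 * y) * exp (-y) := by
      rw [mul_div_assoc', div_le_iff₀ hsinh]
      linear_combination hdecay - (1 + 2 * y) * hinv

lemma integrableOn_pow_mul_exp_neg (k : ℕ) :
    IntegrableOn (fun y => y ^ k * exp (-y)) (Ioi 0) := by
  refine (GammaIntegral_convergent (s := k + 1) (by positivity)).congr_fun (fun y _ => ?_)
    measurableSet_Ioi
  show exp (-y) * y ^ ((k : ℝ) + 1 - 1) = y ^ k * exp (-y)
  rw [add_sub_cancel_right, rpow_natCast, mul_comm]

lemma integrableOn_pow_mul_hWeight {n m : ℕ} (h : Odd n ∨ m ≠ 0) :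
    IntegrableOn (fun y => y ^ m * hWeight n y) (Ioi 0) := by
  have hmeas : AEStronglyMeasurable (fun y => y ^ m * hWeight n y) (volume.restrict (Ioi 0)) :=
    ((continuousOn_pow m).mul (continuousOn_hWeight n)).aestronglyMeasurable measurableSet_Ioi
  rcases h with hn | hm
  · refine ((integrableOn_pow_mul_exp_neg m).const_mul 2).mono' hmeas ?_
    filter_upwards [ae_restrict_mem measurableSet_Ioi] with y (hy : 0 < y)
    rw [Real.norm_of_nonneg (by have := hWeight_pos n hy; positivity)]
    nlinarith [hWeight_le_of_odd hn y, pow_pos hy m]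
  · obtain ⟨j, rfl⟩ := Nat.exists_eq_succ_of_ne_zero hm
    refine ((integrableOn_pow_mul_exp_neg j).add
      ((integrableOn_pow_mul_exp_neg (j + 1)).const_mul 2)).mono' hmeas ?_
    filter_upwards [ae_restrict_mem measurableSet_Ioi] with y (hy : 0 < y)
    rw [Real.norm_of_nonneg (by have := hWeight_pos n hy; positivity)]
    calc y ^ (j + 1) * hWeight n y = y ^ j * (y * hWeight n y) := by ring
      _ ≤ y ^ j * ((1 + 2 * y) * exp (-y)) :=
        mul_le_mul_of_nonneg_left (mul_hWeight_le n hy) (by positivity)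
      _ = y ^ j * exp (-y) + 2 * (y ^ (j + 1) * exp (-y)) := by ring

lemma setIntegral_pow_div_sq_add_sq_le {g : ℝ → ℝ} {k : ℕ} (hg : ∀ y ∈ Ioi 0, 0 ≤ g y)
    (hk : IntegrableOn (fun y => y ^ k * g y) (Ioi 0))
    (hk2 : IntegrableOn (fun y => y ^ (k + 2) * g y) (Ioi 0)) {u : ℝ} (hu : u ≠ 0) :
    ∫ y in Ioi 0, y ^ (k + 2) / (y ^ 2 + u ^ 2) * g y ≤
      min (∫ y in Ioi 0, y ^ k * g y) ((∫ y in Ioi 0, y ^ (k + 2) * g y) / u ^ 2) := by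
  have hu2 : 0 < u ^ 2 := by positivity
  have hnonneg :
      0 ≤ᵐ[volume.restrict (Ioi 0)] fun y => y ^ (k + 2) / (y ^ 2 + u ^ 2) * g y := by
    filter_upwards [ae_restrict_mem measurableSet_Ioi] with y (hy : 0 < y)
    have := hg y hy
    positivity
  refine le_min (integral_mono_of_nonneg hnonneg hk ?_) ?_
  · filter_upwards [ae_restrict_mem measurableSet_Ioi] with y (hy : 0 < y)
    refine mul_le_mul_of_nonneg_right ?_ (hg y hy)
    rw [div_le_iff₀ (by positivity), pow_add]
    nlinarith [pow_pos hy k]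
  · rw [← integral_div]
    refine integral_mono_of_nonneg hnonneg (hk2.div_const _) ?_
    filter_upwards [ae_restrict_mem measurableSet_Ioi] with y (hy : 0 < y)
    have := hg y hy
    rw [div_mul_eq_mul_div]
    exact div_le_div_of_nonneg_left (by positivity) hu2 (by nlinarith)

lemma min_div_le_mul_min (A B : ℝ) {t : ℝ} (ht : 0 < t) :
    min A (B / t) ≤ max (max A B) 1 * min 1 (1 / t) := by
  set M := max (max A B) 1
  have hM : 0 ≤ M := zero_le_one.trans (le_max_right _ _)
  rw [mul_min_of_nonneg _ _ hM, mul_one, mul_one_div]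
  exact min_le_min ((le_max_left _ _).trans (le_max_left _ _))
    (div_le_div_of_nonneg_right ((le_max_right _ _).trans (le_max_left _ _)) ht.le)

lemma exists_integral_hWeight_le {n : ℕ} (hn : 1 ≤ n) :
    ∃ C > 0, ∀ u : ℝ, u ≠ 0 →
      ∫ y in Ioi 0, y ^ (n + 1) / (y ^ 2 + u ^ 2) * hWeight n y ≤ C * min 1 (1 / u ^ 2) := by
  obtain ⟨k, rfl⟩ := Nat.exists_eq_add_of_le' hn
  have hk : Odd (k + 1) ∨ k ≠ 0 := by
    rcases Nat.eq_zero_or_pos k with rfl | hk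
    · exact Or.inl odd_one
    · exact Or.inr hk.ne'
  exact ⟨_, one_pos.trans_le (le_max_right _ 1), fun u hu =>
    (setIntegral_pow_div_sq_add_sq_le (fun y hy => (hWeight_pos _ hy).le)
      (integrableOn_pow_mul_hWeight hk) (integrableOn_pow_mul_hWeight (Or.inr (by omega))) hu).trans
      (min_div_le_mul_min _ _ (by positivity))⟩

lemma hFun_eq_mul (n : ℕ) (u : ℝ) :
    hFun n u = (Complex.I ^ (n + 2) * Complex.exp (Complex.I * u)).im *
      ∫ y in Ioi 0, y ^ (n + 1) / (y ^ 2 + u ^ 2) * hWeight n y := rfl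

lemma abs_hFun_le (n : ℕ) (u : ℝ) :
    |hFun n u| ≤ ∫ y in Ioi 0, y ^ (n + 1) / (y ^ 2 + u ^ 2) * hWeight n y := by
  have hint : 0 ≤ ∫ y in Ioi 0, y ^ (n + 1) / (y ^ 2 + u ^ 2) * hWeight n y :=
    setIntegral_nonneg measurableSet_Ioi fun y (hy : 0 < y) => by
      have := hWeight_pos n hy; positivity
  have htrig : |(Complex.I ^ (n + 2) * Complex.exp (Complex.I * u)).im| ≤ 1 :=
    (Complex.abs_im_le_norm _).trans (by simp [Complex.norm_exp])
  rw [hFun_eq_mul, abs_mul, abs_of_nonneg hint]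
  exact mul_le_of_le_one_left hint htrig

lemma im_mul_exp_I_mul (c : ℂ) (u : ℝ) :
    (c * Complex.exp (Complex.I * u)).im = c.re * sin u + c.im * cos u := by
  rw [mul_comm Complex.I, Complex.exp_mul_I]
  simp [Complex.mul_im, ← Complex.ofReal_cos, ← Complex.ofReal_sin]

lemma re_I_pow_of_odd {n : ℕ} (hn : Odd n) : (Complex.I ^ n).re = 0 := by
  obtain ⟨k, rfl⟩ := hn
  rw [pow_succ, pow_mul, Complex.I_sq]
  rcases neg_one_pow_eq_or ℂ k with h | h <;> simp [h]

lemma im_I_pow_of_even {n : ℕ} (hn : Even n) : (Complex.I ^ n).im = 0 := by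
  obtain ⟨k, rfl⟩ := hn
  rw [← two_mul, pow_mul, Complex.I_sq]
  rcases neg_one_pow_eq_or ℂ k with h | h <;> simp [h]

lemma hFun_eq_sin_cos_mul (n : ℕ) (u : ℝ) :
    hFun n u = ((Complex.I ^ (n + 2)).re * sin u + (Complex.I ^ (n + 2)).im * cos u) *
      ∫ y in Ioi 0, y ^ (n + 1) / (y ^ 2 + u ^ 2) * hWeight n y := by
  rw [hFun_eq_mul, im_mul_exp_I_mul]

/-- |h_n(u)| ≪ min{1, 1/u²} for u ≠ 0, and h_n is even for n odd,
    odd for n even. -/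
theorem hFun_properties (n : ℕ) (hn : 1 ≤ n) :
    (∃ C > 0, ∀ u : ℝ, u ≠ 0 → |hFun n u| ≤ C * min 1 (1 / u ^ 2)) ∧
    (Odd n → ∀ u : ℝ, hFun n (-u) = hFun n u) ∧
    (Even n → ∀ u : ℝ, hFun n (-u) = -hFun n u) := by
  refine ⟨?_, fun hodd u => ?_, fun heven u => ?_⟩
  · obtain ⟨C, hC, hbound⟩ := exists_integral_hWeight_le hn
    exact ⟨C, hC, fun u hu => (abs_hFun_le n u).trans (hbound u hu)⟩
  · simp [hFun_eq_sin_cos_mul, re_I_pow_of_odd (hodd.add_even even_two)]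
  · simp [hFun_eq_sin_cos_mul, im_I_pow_of_even (heven.add even_two)]
end
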